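/- arXiv:0804.1108 — 5 statements merged into one kernel-verified Lean document; each statement's English description precedes it below -/
import Mathlib

section
/- Let f : ℝ → ℝ. Then f can be written as f = f₁ + f₂ where f₁ is non-decreasing and f₂ is Lipschitz with Lipschitz constant L if and only if for every u, v ∈ ℝ, (u − v)(f(u) − f(v)) ≥ −L(u − v)². -/
/-- `f = f₁ + f₂` with `f₁` non-decreasing and `f₂` Lipschitz with constant `L`
iff `(u-v)(f u - f v) ≥ -L (u-v)²` for all `u, v`. -/
theorem stmt1 (f : ℝ → ℝ) (L : ℝ) (hL : 0 ≤ L) :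
    (∃ f₁ f₂ : ℝ → ℝ, (∀ t, f t = f₁ t + f₂ t) ∧ Monotone f₁ ∧
        (∀ u v, |f₂ u - f₂ v| ≤ L * |u - v|)) ↔
      ∀ u v : ℝ, (u - v) * (f u - f v) ≥ -L * (u - v) ^ 2 := by
  constructor
  · rintro ⟨f₁, f₂, hf, hmono, hlip⟩ u v
    have h1 : (u - v) * (f₁ u - f₁ v) ≥ 0 := by
      rcases le_total u v with h | h
      · have := hmono h; nlinarith
      · have := hmono h; nlinarith
    have h2 : (u - v) * (f₂ u - f₂ v) ≥ -L * (u - v) ^ 2 := by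
      have hl := hlip u v
      have h3 : -(L * |u - v|) ≤ f₂ u - f₂ v := by
        have := neg_abs_le (f₂ u - f₂ v); linarith
      have h4 : f₂ u - f₂ v ≤ L * |u - v| := (le_abs_self _).trans hl
      rcases le_total u v with h | h
      · rw [abs_of_nonpos (show u - v ≤ 0 by linarith)] at h3 h4
        nlinarith
      · rw [abs_of_nonneg (show 0 ≤ u - v by linarith)] at h3 h4
        nlinarith
    have hsum : f u - f v = (f₁ u - f₁ v) + (f₂ u - f₂ v) := by rw [hf u, hf v]; ring
    rw [hsum]; nlinarith
  · intro h
    refine ⟨fun t => f t + L * t, fun t => -(L * t), fun t => by ring, ?_, ?_⟩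
    · intro u v huv
      rcases eq_or_lt_of_le huv with rfl | huv
      · exact le_rfl
      · have hh := h v u
        simp only
        nlinarith
    · intro u v
      simp only
      rw [show -(L * u) - -(L * v) = -(L * (u - v)) by ring, abs_neg, abs_mul,
        abs_of_nonneg hL]
end

section
/- For H ∈ (1/2, 1), the constant c_H := (H(2H−1) / B(2−2H, H−1/2))^{1/2} satisfies c_H² ∫_ℝ (u − y)₊^{H−3/2} (v − y)₊^{H−3/2} dy = H(2H−1) |u − v|^{2H−2} for all u ≠ v in ℝ. -/
/-!
For `v < u` the integrand vanishes on `[v, ∞)`, and the substitution `y = u - (u - v) / x`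
turns `∫_{-∞}^v (u - y)^p (v - y)^q dy` into
`(u - v)^(p+q+1) ∫_0^1 x^(-p-q-2) (1 - x)^q dx = B(-p-q-1, q+1) (u - v)^(p+q+1)`.
With `p = q = H - 3/2` this is `B(2 - 2H, H - 1/2) |u - v|^(2H-2)`, and `c_H²` cancels the
Beta factor.
-/

open MeasureTheory

/-- The real Beta function. -/
noncomputable def betaFn (a b : ℝ) : ℝ := Real.Gamma a * Real.Gamma b / Real.Gamma (a + b)

open Set

lemma betaFn_eq_integral_Ioo {a b : ℝ} (ha : 0 < a) (hb : 0 < b) :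
    betaFn a b = ∫ x in Ioo (0 : ℝ) 1, x ^ (a - 1) * (1 - x) ^ (b - 1) := by
  have hint := Complex.betaIntegral_convergent (u := a) (v := b) (by simpa) (by simpa)
  rw [intervalIntegrable_iff_integrableOn_Ioc_of_le zero_le_one] at hint
  change ProbabilityTheory.beta a b = _
  rw [ProbabilityTheory.beta_eq_betaIntegralReal a b ha hb, Complex.betaIntegral,
    intervalIntegral.integral_of_le zero_le_one, ← RCLike.re_to_complex, ← integral_re hint,
    integral_Ioc_eq_integral_Ioo]
  refine setIntegral_congr_fun measurableSet_Ioo fun x ⟨hx₀, hx₁⟩ ↦ ?_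
  norm_cast
  rw [← Complex.ofReal_cpow hx₀.le, ← Complex.ofReal_cpow (by linarith), RCLike.re_to_complex,
    ← Complex.ofReal_mul, Complex.ofReal_re]

lemma image_sub_div_Ioo_zero_one {u v : ℝ} (hvu : v < u) :
    (fun x ↦ u - (u - v) / x) '' Ioo 0 1 = Iio v := by
  ext y
  constructor
  · rintro ⟨x, ⟨hx₀, hx₁⟩, rfl⟩
    have : u - v < (u - v) / x := by rw [lt_div_iff₀ hx₀]; nlinarith
    simp only [mem_Iio]
    linarith
  · intro (hy : y < v)
    have huy : 0 < u - y := by linarith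
    refine ⟨(u - v) / (u - y), ⟨div_pos (by linarith) huy, (div_lt_one huy).2 (by linarith)⟩,
      ?_⟩
    simp only [div_div_cancel₀ (sub_pos.2 hvu).ne', sub_sub_cancel]

lemma integral_Iio_sub_rpow_mul_sub_rpow {p q : ℝ} (hpq : p + q < -1) (hq : -1 < q) {u v : ℝ}
    (hvu : v < u) :
    ∫ y in Iio v, (u - y) ^ p * (v - y) ^ q =
      betaFn (-p - q - 1) (q + 1) * (u - v) ^ (p + q + 1) := by
  set a := u - v
  have ha : 0 < a := sub_pos.2 hvu
  have hderiv : ∀ x ∈ Ioo (0 : ℝ) 1,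
      HasDerivWithinAt (fun x ↦ u - a / x) (a / x ^ 2) (Ioo 0 1) x := by
    intro x hx
    refine HasDerivAt.hasDerivWithinAt ?_
    convert ((hasDerivAt_inv hx.1.ne').const_mul a).const_sub u using 1
    · simp only [div_eq_mul_inv]
    · ring
  have hinj : InjOn (fun x ↦ u - a / x) (Ioo 0 1) := fun x _ y _ hxy ↦
    inv_injective <| mul_right_injective₀ ha.ne' <| by
      simpa only [div_eq_mul_inv, sub_right_inj] using hxy
  have hintegrand : ∀ x ∈ Ioo (0 : ℝ) 1,
      |a / x ^ 2| • ((u - (u - a / x)) ^ p * (v - (u - a / x)) ^ q) =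
        a ^ (p + q + 1) * (x ^ (-p - q - 1 - 1) * (1 - x) ^ (q + 1 - 1)) := by
    rintro x ⟨hx₀, hx₁⟩
    have hvx : v - (u - a / x) = a / x * (1 - x) := by simp only [a]; field_simp; ring
    rw [sub_sub_cancel, hvx, smul_eq_mul, abs_of_pos (by positivity),
      Real.mul_rpow (by positivity) (by linarith), Real.div_rpow ha.le hx₀.le,
      Real.div_rpow ha.le hx₀.le, add_sub_cancel_right, Real.rpow_add ha, Real.rpow_add ha,
      Real.rpow_one, Real.rpow_sub hx₀, Real.rpow_sub hx₀, Real.rpow_sub hx₀, Real.rpow_one,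
      Real.rpow_neg hx₀.le]
    field_simp
  rw [← image_sub_div_Ioo_zero_one hvu,
    integral_image_eq_integral_abs_deriv_smul measurableSet_Ioo hderiv hinj,
    setIntegral_congr_fun measurableSet_Ioo hintegrand, integral_const_mul,
    betaFn_eq_integral_Ioo (by linarith) (by linarith), mul_comm]

lemma integral_max_sub_rpow_mul_max_sub_rpow {p q : ℝ} (hq : q ≠ 0) {u v : ℝ}
    (hvu : v ≤ u) :
    ∫ y, max (u - y) 0 ^ p * max (v - y) 0 ^ q = ∫ y in Iio v, (u - y) ^ p * (v - y) ^ q := by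
  have hsupp : ∀ y ∉ Iio v, max (u - y) 0 ^ p * max (v - y) 0 ^ q = 0 :=
    fun y (hy : ¬y < v) ↦ by
      rw [max_eq_right (show v - y ≤ 0 by linarith), Real.zero_rpow hq, mul_zero]
  rw [← setIntegral_eq_integral_of_forall_compl_eq_zero hsupp]
  refine setIntegral_congr_fun measurableSet_Iio fun y (hy : y < v) ↦ ?_
  rw [max_eq_left (by linarith), max_eq_left (by linarith)]

lemma integral_max_sub_rpow_mul_max_sub_rpow_self {p : ℝ} (hp₁ : -1 < p) (hp₂ : p < -1 / 2)
    {u v : ℝ} (huv : u ≠ v) :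
    ∫ y, max (u - y) 0 ^ p * max (v - y) 0 ^ p =
      betaFn (-2 * p - 1) (p + 1) * |u - v| ^ (2 * p + 1) := by
  wlog hvu : v < u generalizing u v
  · rw [abs_sub_comm, ← this huv.symm (huv.lt_or_gt.resolve_right hvu)]
    simp only [mul_comm]
  rw [integral_max_sub_rpow_mul_max_sub_rpow (by linarith) hvu.le,
    integral_Iio_sub_rpow_mul_sub_rpow (by linarith) hp₁ hvu, abs_of_pos (sub_pos.2 hvu)]
  congr 2 <;> ring

/-- for `H ∈ (1/2,1)` and `c_H = (H(2H-1)/B(2-2H, H-1/2))^{1/2}`,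
`c_H² ∫ (u-y)₊^{H-3/2}(v-y)₊^{H-3/2} dy = H(2H-1)|u-v|^{2H-2}` for `u ≠ v`. -/
theorem stmt2 (H : ℝ) (hH : H ∈ Set.Ioo (1/2 : ℝ) 1) (u v : ℝ) (huv : u ≠ v) :
    (Real.sqrt (H * (2 * H - 1) / betaFn (2 - 2 * H) (H - 1/2))) ^ 2 *
        ∫ y : ℝ, (max (u - y) 0) ^ (H - 3/2) * (max (v - y) 0) ^ (H - 3/2) =
      H * (2 * H - 1) * |u - v| ^ (2 * H - 2) := by
  obtain ⟨hH₁, hH₂⟩ := hH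
  have hB : 0 < betaFn (2 - 2 * H) (H - 1/2) :=
    ProbabilityTheory.beta_pos (by linarith) (by linarith)
  have hintegral := integral_max_sub_rpow_mul_max_sub_rpow_self (p := H - 3/2)
    (by linarith) (by linarith) huv
  rw [show -2 * (H - 3/2) - 1 = 2 - 2 * H by ring, show H - 3/2 + 1 = H - 1/2 by ring,
    show 2 * (H - 3/2) + 1 = 2 * H - 2 by ring] at hintegral
  rw [hintegral, Real.sq_sqrt (div_nonneg (by nlinarith) hB.le), ← mul_assoc,
    div_mul_cancel₀ _ hB.ne']
end

section
/- Let k ≥ 4, H₁,…,H_k ∈ [1/2, 1) with ∑ᵢ Hᵢ > k − 2, and let D ⊆ [−R,R]^k be bounded. Then with G(x,y) = |x−y|^{2−k}, the mixed norm sup_{x ∈ D} ‖G(x,·)‖_{L^{1/H₁,…,1/H_k}(D)} is finite. -/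
open MeasureTheory
open scoped BigOperators

/-- The mixed `L^{p₁,…,p_k}` norm, defined recursively:
`‖h‖ = (∫_{S k} ‖h(·,t)‖_{p₁,…,p_{k-1}}^{p_k} dt)^{1/p_k}`. -/
noncomputable def mixedNorm : (k : ℕ) → (Fin k → ℝ) → (Fin k → Set ℝ) →
    ((Fin k → ℝ) → ℝ) → ℝ
  | 0, _, _, h => |h (fun i => i.elim0)|
  | k + 1, p, S, h =>
      (∫ t in S (Fin.last k),
          (mixedNorm k (fun i => p i.castSucc) (fun i => S i.castSucc)
            (fun η => h (Fin.snoc η t))) ^ p (Fin.last k)) ^ (1 / p (Fin.last k))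

/-- The Euclidean norm on `ℝᵏ`. -/
noncomputable def eucNorm {k : ℕ} (x : Fin k → ℝ) : ℝ := Real.sqrt (∑ i, x i ^ 2)

/-!
Since `|x - y| ≥ |xᵢ - yᵢ|` and `2 - k ≤ 0`, the kernel splits as
`|x - y|^{2-k} ≤ ∏ᵢ |xᵢ - yᵢ|^{βᵢ(2-k)}` with `βᵢ = Hᵢ / ∑ⱼ Hⱼ`. Integrating out one coordinate
at a time, the mixed norm of a function dominated by such a product is at most the product of the
one-dimensional `L^{pᵢ}` norms of the factors. With `pᵢ = 1/Hᵢ` the `i`-th factor is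
`∫ |xᵢ - t|^{(2-k)/∑ⱼHⱼ} dt`, which is bounded uniformly in `xᵢ ∈ [-R, R]` because the exponent
exceeds `-1` exactly when `∑ᵢ Hᵢ > k - 2`.
-/

open Set

lemma mixedNorm_nonneg : ∀ (k : ℕ) (p : Fin k → ℝ) (S : Fin k → Set ℝ)
    (f : (Fin k → ℝ) → ℝ), 0 ≤ mixedNorm k p S f
  | 0, _, _, _ => abs_nonneg _
  | k + 1, _, _, _ => Real.rpow_nonneg
      (integral_nonneg fun _ => Real.rpow_nonneg (mixedNorm_nonneg k _ _ _) _) _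

lemma mixedNorm_succ_le {k : ℕ} {p : Fin (k + 1) → ℝ} (hp : 0 < p (Fin.last k))
    {S : Fin (k + 1) → Set ℝ} {f : (Fin (k + 1) → ℝ) → ℝ} {g : ℝ → ℝ} (hg : ∀ t, 0 ≤ g t)
    (hgi : IntegrableOn (fun t => g t ^ p (Fin.last k)) (S (Fin.last k))) {B : ℝ} (hB : 0 ≤ B)
    (hfg : ∀ᵐ t, mixedNorm k (fun i => p i.castSucc) (fun i => S i.castSucc)
      (fun η => f (Fin.snoc η t)) ≤ B * g t) :
    mixedNorm (k + 1) p S f ≤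
      B * (∫ t in S (Fin.last k), g t ^ p (Fin.last k)) ^ (1 / p (Fin.last k)) := by
  set q := p (Fin.last k)
  rw [mixedNorm]
  calc _ ≤ (∫ t in S (Fin.last k), (B * g t) ^ q) ^ (1 / q) := by
        refine Real.rpow_le_rpow (integral_nonneg fun _ => Real.rpow_nonneg (mixedNorm_nonneg ..) _)
          (integral_mono_of_nonneg (.of_forall fun _ => Real.rpow_nonneg (mixedNorm_nonneg ..) _)
            ?_ (ae_restrict_of_ae ?_)) (by positivity)
        · simpa only [Real.mul_rpow hB (hg _)] using hgi.const_mul (B ^ q)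
        · filter_upwards [hfg] with t ht
          exact Real.rpow_le_rpow (mixedNorm_nonneg ..) ht hp.le
    _ = B * (∫ t in S (Fin.last k), g t ^ q) ^ (1 / q) := by
        simp only [Real.mul_rpow hB (hg _), integral_const_mul]
        rw [Real.mul_rpow (by positivity) (integral_nonneg fun _ => Real.rpow_nonneg (hg _) _),
          ← Real.rpow_mul hB, mul_one_div_cancel hp.ne', Real.rpow_one]

theorem mixedNorm_le_mul_prod_integral {k : ℕ} {p : Fin k → ℝ} (hp : ∀ i, 0 < p i)
    {S : Fin k → Set ℝ} {g : Fin k → ℝ → ℝ} (hg : ∀ i t, 0 ≤ g i t)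
    (hgi : ∀ i, IntegrableOn (fun t => g i t ^ p i) (S i))
    {E : Fin k → Set ℝ} (hE : ∀ i, volume (E i) = 0) {c : ℝ} (hc : 0 ≤ c)
    {f : (Fin k → ℝ) → ℝ} (hf : ∀ η, (∀ i, η i ∉ E i) → |f η| ≤ c * ∏ i, g i (η i)) :
    mixedNorm k p S f ≤ c * ∏ i, (∫ t in S i, g i t ^ p i) ^ (1 / p i) := by
  induction k generalizing c with
  | zero => simpa [mixedNorm] using hf _ finZeroElim
  | succ k ih =>
    have hB : 0 ≤ c * ∏ i : Fin k, (∫ t in S i.castSucc, g i.castSucc t ^ p i.castSucc) ^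
        (1 / p i.castSucc) := by
      have hI : ∀ i, 0 ≤ ∫ t in S i, g i t ^ p i :=
        fun i => integral_nonneg fun t => Real.rpow_nonneg (hg i t) (p i)
      exact mul_nonneg hc (Finset.prod_nonneg fun i _ => Real.rpow_nonneg (hI _) _)
    rw [Fin.prod_univ_castSucc, ← mul_assoc]
    refine mixedNorm_succ_le (hp _) (hg _) (hgi _) hB ?_
    filter_upwards [measure_eq_zero_iff_ae_notMem.1 (hE (Fin.last k))] with t ht
    refine (ih (fun i => hp _) (fun i => hg _) (fun i => hgi _) (E := fun i => E i.castSucc)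
      (fun i => hE _) (mul_nonneg hc (hg _ t)) fun η hη => ?_).trans_eq (by ring)
    convert hf (Fin.snoc η t) (Fin.lastCases (by simpa using ht) (by simpa using hη)) using 1
    rw [Fin.prod_univ_castSucc]
    simp only [Fin.snoc_castSucc, Fin.snoc_last]
    ring

lemma eucNorm_nonneg {k : ℕ} (z : Fin k → ℝ) : 0 ≤ eucNorm z := Real.sqrt_nonneg _

lemma abs_le_eucNorm {k : ℕ} (z : Fin k → ℝ) (i : Fin k) : |z i| ≤ eucNorm z := by
  rw [← Real.sqrt_sq_eq_abs]
  exact Real.sqrt_le_sqrt (Finset.single_le_sum (fun j _ => sq_nonneg (z j)) (Finset.mem_univ i))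

lemma eucNorm_rpow_le_prod_abs_rpow {k : ℕ} {z : Fin k → ℝ} (hz : ∀ i, z i ≠ 0)
    {β : Fin k → ℝ} (hβ : ∀ i, 0 ≤ β i) (hβ1 : ∑ i, β i = 1) {s : ℝ} (hs : s ≤ 0) :
    eucNorm z ^ s ≤ ∏ i, |z i| ^ (β i * s) := by
  obtain ⟨i₀, -, -⟩ := Finset.exists_ne_zero_of_sum_ne_zero (hβ1 ▸ one_ne_zero)
  have hN : 0 < eucNorm z := (abs_pos.2 (hz i₀)).trans_le (abs_le_eucNorm z i₀)
  calc eucNorm z ^ s = ∏ i, eucNorm z ^ (β i * s) := by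
        rw [← Real.rpow_sum_of_pos hN, ← Finset.sum_mul, hβ1, one_mul]
    _ ≤ ∏ i, |z i| ^ (β i * s) :=
        Finset.prod_le_prod (fun i _ => by positivity) fun i _ =>
          Real.rpow_le_rpow_of_nonpos (abs_pos.2 (hz i)) (abs_le_eucNorm z i)
            (mul_nonpos_of_nonneg_of_nonpos (hβ i) hs)

lemma abs_indicator_eucNorm_sub_rpow_le {k : ℕ} (D : Set (Fin k → ℝ)) {x η : Fin k → ℝ}
    (hη : ∀ i, η i ≠ x i) {β : Fin k → ℝ} (hβ : ∀ i, 0 ≤ β i) (hβ1 : ∑ i, β i = 1) {s : ℝ}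
    (hs : s ≤ 0) :
    |D.indicator (fun y => eucNorm (x - y) ^ s) η| ≤ ∏ i, |x i - η i| ^ (β i * s) := by
  by_cases hηD : η ∈ D
  · rw [indicator_of_mem hηD, abs_of_nonneg (Real.rpow_nonneg (eucNorm_nonneg _) _)]
    exact eucNorm_rpow_le_prod_abs_rpow (fun i => sub_ne_zero.2 (hη i).symm) hβ hβ1 hs
  · rw [indicator_of_notMem hηD, abs_zero]
    positivity

lemma locallyIntegrable_abs_rpow {a : ℝ} (ha : -1 < a) :
    LocallyIntegrable (fun u : ℝ => |u| ^ a) :=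
  locallyIntegrable_of_norm_le_rpow (C := 1) (α := -a) (by simp) (by simp; linarith)
    (.of_forall fun u => by
      rw [one_mul, neg_neg, Real.norm_eq_abs, Real.norm_eq_abs, abs_of_nonneg (by positivity)])
    (continuous_abs.measurable.pow_const a).aestronglyMeasurable

lemma integrableOn_abs_sub_rpow {a x b c : ℝ} (ha : -1 < a) (hbc : b ≤ c) :
    IntegrableOn (fun t => |x - t| ^ a) (Icc b c) := by
  have hint := (((locallyIntegrable_abs_rpow ha).integrableOn_isCompact
    isCompact_uIcc).intervalIntegrable (a := x - b) (b := x - c)).comp_sub_left x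
  rw [sub_sub_cancel, sub_sub_cancel] at hint
  exact (intervalIntegrable_iff_integrableOn_Icc_of_le hbc).1 hint

lemma setIntegral_abs_sub_rpow_le {a x R : ℝ} (ha : -1 < a) (hx : x ∈ Icc (-R) R) :
    ∫ t in Icc (-R) R, |x - t| ^ a ≤ ∫ u in Icc (-(2 * R)) (2 * R), |u| ^ a := by
  have hR : -R ≤ R := hx.1.trans hx.2
  have hshift : ∫ t in Icc (-R) R, |x - t| ^ a = ∫ u in Icc (x - R) (x + R), |u| ^ a := by
    rw [integral_Icc_eq_integral_Ioc, ← intervalIntegral.integral_of_le hR,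
      intervalIntegral.integral_comp_sub_left (fun u => |u| ^ a) x, sub_neg_eq_add,
      intervalIntegral.integral_of_le (by linarith), integral_Icc_eq_integral_Ioc]
  rw [hshift]
  exact setIntegral_mono_set
    ((locallyIntegrable_abs_rpow ha).integrableOn_isCompact isCompact_Icc)
    (.of_forall fun u => Real.rpow_nonneg (abs_nonneg u) a)
    (Icc_subset_Icc (by linarith [hx.1]) (by linarith [hx.2])).eventuallyLE

theorem stmt4_general (k : ℕ) (hk : 4 ≤ k) (H : Fin k → ℝ)
    (hH : ∀ i, H i ∈ Set.Ico (1/2 : ℝ) 1) (hsum : (k : ℝ) - 2 < ∑ i, H i)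
    (R : ℝ) (D : Set (Fin k → ℝ))
    (hD : D ⊆ Set.pi Set.univ fun _ => Set.Icc (-R) R) :
    ∃ K : ℝ, ∀ x ∈ D,
      mixedNorm k (fun i => 1 / H i) (fun _ => Set.Icc (-R) R)
        (Set.indicator D fun y => eucNorm (x - y) ^ ((2:ℝ) - k)) ≤ K := by
  set σ := ∑ i, H i
  have hH0 : ∀ i, 0 < H i := fun i => by linarith [(hH i).1]
  have hk' : (4 : ℝ) ≤ k := by exact_mod_cast hk
  have hσ : 0 < σ := by linarith
  have hpow : ∀ i t, (|t| ^ (H i / σ * (2 - k))) ^ (1 / H i) = |t| ^ ((2 - k) / σ) :=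
      fun i t => by
    rw [← Real.rpow_mul (abs_nonneg t)]
    congr 1
    field_simp [(hH0 i).ne']
  set a := (2 - k) / σ
  have ha : -1 < a := by rw [lt_div_iff₀ hσ]; linarith
  refine ⟨∏ i, (∫ u in Icc (-(2 * R)) (2 * R), |u| ^ a) ^ (1 / (1 / H i)), fun x hx => ?_⟩
  have hxR : ∀ i, x i ∈ Icc (-R) R := fun i => hD hx i (mem_univ i)
  calc _ ≤ 1 * ∏ i, (∫ t in Icc (-R) R, (|x i - t| ^ (H i / σ * (2 - k))) ^ (1 / H i)) ^
        (1 / (1 / H i)) := by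
        -- `0 ^ s = 0` for `s < 0`, so the product bound fails on the null hyperplanes `ηᵢ = xᵢ`
        refine mixedNorm_le_mul_prod_integral (fun i => one_div_pos.2 (hH0 i))
          (fun i t => Real.rpow_nonneg (abs_nonneg _) _) (fun i => ?_) (E := fun i => {x i})
          (fun i => measure_singleton _) zero_le_one fun η hη => ?_
        · simp_rw [hpow]
          exact integrableOn_abs_sub_rpow ha ((hxR i).1.trans (hxR i).2)
        · rw [one_mul]
          exact abs_indicator_eucNorm_sub_rpow_le D hη (fun i => div_nonneg (hH0 i).le hσ.le)
            (by rw [← Finset.sum_div, div_self hσ.ne']) (by linarith)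
    _ ≤ _ := by
        simp_rw [hpow, one_mul]
        gcongr with i
        · exact (one_div_pos.2 (one_div_pos.2 (hH0 i))).le
        · exact setIntegral_abs_sub_rpow_le ha (hxR i)

/-- for `k ≥ 4`, `Hᵢ ∈ [1/2,1)` with `∑ Hᵢ > k-2`, `D ⊆ [-R,R]^k`,
the mixed norms `‖G(x,·)‖_{L^{1/H₁,…,1/H_k}(D)}`, `G(x,y) = |x-y|^{2-k}`, are bounded
uniformly in `x ∈ D`. -/
theorem stmt4 (k : ℕ) (hk : 4 ≤ k) (H : Fin k → ℝ)
    (hH : ∀ i, H i ∈ Set.Ico (1/2 : ℝ) 1) (hsum : (k : ℝ) - 2 < ∑ i, H i)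
    (R : ℝ) (hR : 0 < R) (D : Set (Fin k → ℝ))
    (hD : D ⊆ Set.pi Set.univ fun _ => Set.Icc (-R) R) :
    ∃ K : ℝ, ∀ x ∈ D,
      mixedNorm k (fun i => 1 / H i) (fun _ => Set.Icc (-R) R)
        (Set.indicator D fun y => eucNorm (x - y) ^ ((2:ℝ) - k)) ≤ K :=
  stmt4_general k hk H hH hsum R D hD
end

section
/- Let k ≥ 4, Ψ̂ : ℝ^k → ℝ a rapidly decreasing function (for every θ ≥ 0 there exists C(θ) with |Ψ̂(ξ)| ≤ C(θ)|ξ|^{−θ} for all ξ ≠ 0). Fix δ ∈ (0,2), μ ∈ (0, (2−δ)/(k−2)), ε = n^{−μ}. Then the tail sum A₁ = ∑_{β ∈ ℕ^k, max βᵢ ≥ n} Ψ̂(εβ)²/(π⁴|β|⁴) satisfies A₁ ≤ C n^{−δ} for a constant C independent of n. -/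
/-!
Choose the decay exponent `θ` with `2θ(1 - μ) = δ + 2k - 4`, which is possible because
`μ < 1`, and then `θ + 2 ≥ k`. The decay of `Ψ̂` bounds each summand by
`C² n^{2μθ} |β|^{-2θ-4} / π⁴`. On the tail some `βⱼ ≥ n`, so `|β|² ≥ n²`; together with
`∏ βᵢ² ≤ |β|^{2k}` this gives `|β|^{-2θ-4} ≤ n^{2k-4-2θ} ∏ βᵢ^{-2}`, whose sum over `ℕᵏ` is a
product of convergent series, while the powers of `n` combine to `n^{-δ}`.
-/

open scoped BigOperators

open Finset Real

theorem summable_prod_fin_pi {α : Type*} {w : α → ℝ} (hw : Summable w) (hw0 : 0 ≤ w) :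
    ∀ k : ℕ, Summable fun β : Fin k → α => ∏ i, w (β i)
  | 0 => .of_finite
  | k + 1 => by
    have hprod := hw.mul_of_nonneg (summable_prod_fin_pi hw hw0 k) hw0
      fun β => prod_nonneg fun i _ => hw0 _
    refine ((Fin.consEquiv fun _ => α).symm.summable_iff.2 hprod).congr fun β => ?_
    simp [Fin.consEquiv, Fin.prod_univ_succ, Fin.tail]

theorem sum_rpow_neg_le {ι : Type*} [Fintype ι] {y : ι → ℝ} (hy : ∀ i, 0 < y i) {a p : ℝ}
    (ha : 0 < a) (haS : a ≤ ∑ i, y i) (hp : Fintype.card ι ≤ p) :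
    (∑ i, y i) ^ (-p) ≤ a ^ (Fintype.card ι - p) * ∏ i, (y i)⁻¹ := by
  set S := ∑ i, y i
  have hS : 0 < S := ha.trans_le haS
  have hprod : ∏ i, y i ≤ S ^ Fintype.card ι := by
    calc ∏ i, y i ≤ ∏ _i : ι, S := prod_le_prod (fun i _ => (hy i).le)
          fun i _ => single_le_sum (fun j _ => (hy j).le) (mem_univ i)
      _ = S ^ Fintype.card ι := by rw [prod_const, card_univ]
  calc S ^ (-p) = S ^ ((Fintype.card ι : ℝ) - p) * (S ^ Fintype.card ι)⁻¹ := by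
        rw [← rpow_natCast, ← rpow_neg hS.le, ← rpow_add hS]; ring_nf
    _ ≤ a ^ ((Fintype.card ι : ℝ) - p) * (∏ i, y i)⁻¹ := by
        gcongr ?_ * ?_
        · exact rpow_le_rpow_of_nonpos ha haS (by linarith)
        · exact inv_anti₀ (prod_pos fun i _ => hy i) hprod
    _ = a ^ ((Fintype.card ι : ℝ) - p) * ∏ i, (y i)⁻¹ := by rw [prod_inv_distrib]

theorem eucNorm_const_mul {k : ℕ} {c : ℝ} (hc : 0 ≤ c) (x : Fin k → ℝ) :
    eucNorm (fun i => c * x i) = c * eucNorm x := by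
  simp only [eucNorm, mul_pow, ← mul_sum, sqrt_mul (sq_nonneg c), sqrt_sq hc]

theorem sq_le_of_abs_le_eucNorm_rpow {k : ℕ} {Psi : (Fin k → ℝ) → ℝ} {C θ : ℝ}
    (hC : ∀ ξ : Fin k → ℝ, ξ ≠ 0 → |Psi ξ| ≤ C * eucNorm ξ ^ (-θ)) {c : ℝ} (hc : 0 < c)
    {x : Fin k → ℝ} (hx : x ≠ 0) :
    Psi (fun i => c * x i) ^ 2 ≤ C ^ 2 * c ^ (-2 * θ) * (∑ i, x i ^ 2) ^ (-θ) := by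
  have hcx : (fun i => c * x i) ≠ 0 := fun h =>
    hx (funext fun i => (mul_eq_zero.1 (congrFun h i)).resolve_left hc.ne')
  have hbound := hC _ hcx
  rw [eucNorm_const_mul hc.le] at hbound
  have hnorm : 0 ≤ eucNorm x := sqrt_nonneg _
  calc Psi (fun i => c * x i) ^ 2 = |Psi (fun i => c * x i)| ^ 2 := (sq_abs _).symm
    _ ≤ (C * (c * eucNorm x) ^ (-θ)) ^ 2 := pow_le_pow_left₀ (abs_nonneg _) hbound 2
    _ = C ^ 2 * c ^ (-2 * θ) * (eucNorm x ^ 2) ^ (-θ) := by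
        rw [mul_rpow hc.le hnorm, mul_pow, mul_pow, ← rpow_mul_natCast hc.le,
          ← rpow_mul_natCast hnorm, ← rpow_natCast_mul hnorm]
        ring_nf
    _ = C ^ 2 * c ^ (-2 * θ) * (∑ i, x i ^ 2) ^ (-θ) := by
        rw [eucNorm, sq_sqrt (sum_nonneg fun i _ => sq_nonneg _)]

theorem tail_term_le {k n : ℕ} (hn : 0 < n) {Psi : (Fin k → ℝ) → ℝ} {C θ : ℝ} (μ : ℝ)
    (hθ : (k : ℝ) - 2 ≤ θ) (hC : ∀ ξ : Fin k → ℝ, ξ ≠ 0 → |Psi ξ| ≤ C * eucNorm ξ ^ (-θ))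
    {β : Fin k → ℕ} (hβ : ∀ i, 1 ≤ β i) {j : Fin k} (hj : n ≤ β j) :
    Psi (fun i => (n : ℝ) ^ (-μ) * (β i : ℝ)) ^ 2 / (π ^ 4 * (∑ i, (β i : ℝ) ^ 2) ^ 2) ≤
      C ^ 2 / π ^ 4 * (n : ℝ) ^ (2 * (μ * θ + k - 2 - θ)) * ∏ i, ((β i : ℝ) ^ 2)⁻¹ := by
  set S := ∑ i, (β i : ℝ) ^ 2
  have hβpos (i : Fin k) : (0 : ℝ) < β i := by exact_mod_cast hβ i
  have hn0 : (0 : ℝ) < n := by exact_mod_cast hn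
  have hS : 0 < S := sum_pos (fun i _ => pow_pos (hβpos i) 2) ⟨j, mem_univ j⟩
  have hdecay := sq_le_of_abs_le_eucNorm_rpow hC (rpow_pos_of_pos hn0 (-μ))
    (x := fun i => (β i : ℝ)) fun h => (hβpos j).ne' (congrFun h j)
  have hnS : (n : ℝ) ^ 2 ≤ S := by
    have : (n : ℝ) ≤ β j := by exact_mod_cast hj
    exact (pow_le_pow_left₀ hn0.le this 2).trans
      (single_le_sum (f := fun i => (β i : ℝ) ^ 2) (fun i _ => sq_nonneg _) (mem_univ j))
  have htail := sum_rpow_neg_le (y := fun i => (β i : ℝ) ^ 2) (fun i => pow_pos (hβpos i) 2)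
    (p := θ + 2) (by positivity) hnS (by simp; linarith)
  simp only [Fintype.card_fin] at htail
  calc Psi (fun i => (n : ℝ) ^ (-μ) * (β i : ℝ)) ^ 2 / (π ^ 4 * S ^ 2)
      ≤ C ^ 2 * ((n : ℝ) ^ (-μ)) ^ (-2 * θ) * S ^ (-θ) / (π ^ 4 * S ^ 2) := by gcongr
    _ = C ^ 2 / π ^ 4 * (n : ℝ) ^ (2 * μ * θ) * S ^ (-(θ + 2)) := by
        rw [← rpow_mul hn0.le, rpow_neg hS.le, rpow_neg hS.le, rpow_add hS, rpow_two]
        field_simp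
    _ ≤ C ^ 2 / π ^ 4 * (n : ℝ) ^ (2 * μ * θ) *
          (((n : ℝ) ^ 2) ^ ((k : ℝ) - (θ + 2)) * ∏ i, ((β i : ℝ) ^ 2)⁻¹) := by gcongr
    _ = C ^ 2 / π ^ 4 * (n : ℝ) ^ (2 * (μ * θ + k - 2 - θ)) * ∏ i, ((β i : ℝ) ^ 2)⁻¹ := by
        rw [← rpow_natCast_mul hn0.le, mul_assoc, ← mul_assoc ((n : ℝ) ^ _), ← rpow_add hn0]
        push_cast; ring_nf

theorem exists_decay_exponent {k : ℕ} (hk : 4 ≤ k) {δ μ : ℝ} (hδ : δ ∈ Set.Ioo (0 : ℝ) 2)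
    (hμ : μ ∈ Set.Ioo (0 : ℝ) ((2 - δ) / ((k : ℝ) - 2))) :
    ∃ θ : ℝ, (k : ℝ) - 2 ≤ θ ∧ 2 * (μ * θ + k - 2 - θ) = -δ := by
  obtain ⟨hδ0, hδ2⟩ := hδ
  obtain ⟨hμ0, hμ1⟩ := hμ
  have hk4 : (4 : ℝ) ≤ k := by exact_mod_cast hk
  have hμ_lt_one : μ < 1 :=
    hμ1.trans_le ((div_le_one (by linarith)).2 (by linarith))
  refine ⟨(δ + 2 * k - 4) / (2 * (1 - μ)), ?_, ?_⟩
  · rw [le_div_iff₀ (by linarith)]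
    nlinarith
  · have : 1 - μ ≠ 0 := by linarith
    field_simp
    ring

theorem tsum_subtype_le_mul_tsum {α : Type*} {s : Set α} {f : s → ℝ} {g : α → ℝ} {c : ℝ}
    (hg : Summable g) (hf0 : 0 ≤ f) (hg0 : 0 ≤ g) (hc : 0 ≤ c) (hfg : ∀ b, f b ≤ c * g b) :
    ∑' b, f b ≤ c * ∑' a, g a := by
  have hcg : Summable fun b : s => c * g b := (hg.subtype s).mul_left c
  calc ∑' b, f b ≤ ∑' b : s, c * g b :=
        (hcg.of_nonneg_of_le hf0 hfg).tsum_le_tsum hfg hcg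
    _ = c * ∑' b : s, g b := tsum_mul_left
    _ ≤ c * ∑' a, g a := mul_le_mul_of_nonneg_left (hg.tsum_subtype_le g s hg0) hc

/-- for rapidly decreasing `Ψ̂`, `δ ∈ (0,2)`, `μ ∈ (0,(2-δ)/(k-2))` and
`ε = n^{-μ}`, the tail sum `A₁ = ∑_{β ∈ ℕᵏ, max βᵢ ≥ n} Ψ̂(εβ)²/(π⁴|β|⁴)`
satisfies `A₁ ≤ C n^{-δ}` with `C` independent of `n`. -/
theorem stmt15 (k : ℕ) (hk : 4 ≤ k) (Psi : (Fin k → ℝ) → ℝ)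
    (hPsi : ∀ θ : ℝ, 0 ≤ θ → ∃ Cθ : ℝ, ∀ ξ : Fin k → ℝ, ξ ≠ 0 →
      |Psi ξ| ≤ Cθ * eucNorm ξ ^ (-θ))
    (δ μ : ℝ) (hδ : δ ∈ Set.Ioo (0:ℝ) 2) (hμ : μ ∈ Set.Ioo (0:ℝ) ((2 - δ) / ((k:ℝ) - 2))) :
    ∃ C : ℝ, ∀ n : ℕ, 1 ≤ n →
      ∑' β : {β : Fin k → ℕ // (∀ i, 1 ≤ β i) ∧ ∃ i, n ≤ β i},
          Psi (fun i => (n : ℝ) ^ (-μ) * ((β : Fin k → ℕ) i : ℝ)) ^ 2 /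
            (Real.pi ^ 4 * (∑ i, ((β : Fin k → ℕ) i : ℝ) ^ 2) ^ 2) ≤
        C * (n : ℝ) ^ (-δ) := by
  obtain ⟨θ, hθk, hθδ⟩ := exists_decay_exponent hk hδ hμ
  obtain ⟨Cθ, hCθ⟩ := hPsi θ (by linarith [show (4 : ℝ) ≤ k by exact_mod_cast hk])
  have hsum := summable_prod_fin_pi (Real.summable_nat_pow_inv.2 one_lt_two)
    (fun m => inv_nonneg.2 (pow_nonneg m.cast_nonneg 2)) k
  refine ⟨Cθ ^ 2 / π ^ 4 * ∑' β : Fin k → ℕ, ∏ i, ((β i : ℝ) ^ 2)⁻¹, fun n hn => ?_⟩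
  rw [mul_right_comm]
  refine tsum_subtype_le_mul_tsum hsum (fun β => by positivity)
    (fun β => prod_nonneg fun i _ => by positivity) (by positivity) ?_
  rintro ⟨β, hβ, j, hj⟩
  simpa [hθδ] using tail_term_le hn μ hθk hCθ hβ hj
end

section
/- For β ∈ {1,…,n−1}^k, let λ_β = −π²∑ₗ βₗ²c_{βₗ} with c_l = ((lπ)/(2n))^{−2}sin²(lπ/(2n)). Then there exists a constant C (depending only on k) such that |−1/(π²|β|²) − 1/λ_β| ≤ C/(|β| n) for all n ≥ 2 and all β ∈ {1,…,n−1}^k. -/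
open scoped BigOperators Real

/-!
With `S = ∑ βₗ²` and `T = ∑ βₗ² c_{βₗ}` the quantity to bound is `|T⁻¹ - S⁻¹| / π²`.
Jordan's inequality `sin x ≥ 2x/π` on `[0, π/2]` gives `c_l ≥ 4/π²`, so `T ≥ 4S/π²`, and
`|x - sin x| ≤ |x|³/6` gives `1 - c_l ≤ π² l²/(12 n²)`, so `0 ≤ S - T ≤ π² S²/(12 n²)`.
Hence the quantity is at most `π²/(48 n²)`, and `|β| ≤ √k n` turns this into `C/(|β| n)`
with `C = π² √k / 48`.
-/

/-- `c_l = (lπ/(2n))^{-2} sin²(lπ/(2n))`. -/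
noncomputable def cCoef (n l : ℕ) : ℝ :=
  ((l : ℝ) * π / (2 * n)) ^ (-2 : ℤ) * Real.sin ((l : ℝ) * π / (2 * n)) ^ 2

namespace Real

lemma sq_sub_sin_sq_le (x : ℝ) : x ^ 2 - sin x ^ 2 ≤ x ^ 4 / 3 := by
  have hadd : |x + sin x| ≤ 2 * |x| := by
    linarith [abs_add_le x (sin x), abs_sin_le_abs (x := x)]
  calc x ^ 2 - sin x ^ 2 ≤ |x - sin x| * |x + sin x| := by
        rw [← abs_mul]; exact (le_abs_self _).trans_eq' (by ring)
    _ ≤ |x| ^ 3 / 6 * (2 * |x|) := by gcongr; exact abs_sub_sin_le x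
    _ = x ^ 4 / 3 := by rw [← Even.pow_abs ⟨2, rfl⟩ x]; ring

lemma one_sub_sin_sq_div_sq_le {x : ℝ} (hx : x ≠ 0) : 1 - sin x ^ 2 / x ^ 2 ≤ x ^ 2 / 3 := by
  have hx2 : 0 < x ^ 2 := by positivity
  rw [one_sub_div hx2.ne', div_le_iff₀ hx2]
  linarith [sq_sub_sin_sq_le x]

lemma four_div_pi_sq_le_sin_sq_div_sq {x : ℝ} (hx₀ : 0 < x) (hx : x ≤ π / 2) :
    4 / π ^ 2 ≤ sin x ^ 2 / x ^ 2 := by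
  have h : 2 / π * x ≤ sin x := mul_le_sin hx₀.le hx
  calc 4 / π ^ 2 = (2 / π * x) ^ 2 / x ^ 2 := by field_simp; ring
    _ ≤ sin x ^ 2 / x ^ 2 := by gcongr

end Real

lemma abs_inv_sub_inv_le_of_abs_sub_le {S T a m : ℝ} (hm : 0 < m) (hS : 0 < S) (hmT : m * S ≤ T)
    (h : |S - T| ≤ a * S ^ 2) : |T⁻¹ - S⁻¹| ≤ a / m := by
  have hT : 0 < T := lt_of_lt_of_le (by positivity) hmT
  calc |T⁻¹ - S⁻¹| = |S - T| / (S * T) := by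
        rw [← abs_of_pos (mul_pos hS hT), ← abs_div]; congr 1; field_simp
    _ ≤ a * S ^ 2 / (S * (m * S)) :=
        div_le_div₀ ((abs_nonneg _).trans h) h (by positivity) (by gcongr)
    _ = a / m := by field_simp

lemma cCoef_eq_sin_sq_div_sq (n l : ℕ) :
    cCoef n l = Real.sin (l * π / (2 * n)) ^ 2 / (l * π / (2 * n)) ^ 2 := by
  rw [cCoef, zpow_neg, zpow_ofNat, inv_mul_eq_div]

lemma cCoef_le_one (n l : ℕ) : cCoef n l ≤ 1 := by
  rw [cCoef_eq_sin_sq_div_sq]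
  exact div_le_one_of_le₀ Real.sin_sq_le_sq (sq_nonneg _)

lemma four_div_pi_sq_le_cCoef {n l : ℕ} (hl : 0 < l) (hln : l ≤ n) : 4 / π ^ 2 ≤ cCoef n l := by
  have hn : (0 : ℝ) < n := by exact_mod_cast hl.trans_le hln
  have hln' : (l : ℝ) ≤ n := by exact_mod_cast hln
  rw [cCoef_eq_sin_sq_div_sq]
  refine Real.four_div_pi_sq_le_sin_sq_div_sq (by positivity) ?_
  rw [div_le_div_iff₀ (by positivity) two_pos]
  nlinarith [Real.pi_pos]

lemma one_sub_cCoef_le {n l : ℕ} (hl : l ≠ 0) (hn : n ≠ 0) :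
    1 - cCoef n l ≤ π ^ 2 / (12 * n ^ 2) * l ^ 2 := by
  rw [cCoef_eq_sin_sq_div_sq]
  refine (Real.one_sub_sin_sq_div_sq_le (by positivity)).trans_eq ?_
  field_simp
  ring

section Sums

variable {ι : Type*} [Fintype ι] {n : ℕ} {β : ι → ℕ}

lemma sum_sq_mul_cCoef_le_sum_sq : ∑ i, (β i : ℝ) ^ 2 * cCoef n (β i) ≤ ∑ i, (β i : ℝ) ^ 2 :=
  Finset.sum_le_sum fun i _ => mul_le_of_le_one_right (sq_nonneg _) (cCoef_le_one n (β i))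

lemma four_div_pi_sq_mul_sum_sq_le (hβ : ∀ i, 0 < β i ∧ β i ≤ n) :
    4 / π ^ 2 * ∑ i, (β i : ℝ) ^ 2 ≤ ∑ i, (β i : ℝ) ^ 2 * cCoef n (β i) := by
  rw [Finset.mul_sum]
  refine Finset.sum_le_sum fun i _ => ?_
  rw [mul_comm]
  exact mul_le_mul_of_nonneg_left (four_div_pi_sq_le_cCoef (hβ i).1 (hβ i).2) (sq_nonneg _)

lemma sum_sq_sub_sum_sq_mul_cCoef_le (hβ : ∀ i, β i ≠ 0) (hn : n ≠ 0) :
    ∑ i, (β i : ℝ) ^ 2 - ∑ i, (β i : ℝ) ^ 2 * cCoef n (β i) ≤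
      π ^ 2 / (12 * n ^ 2) * (∑ i, (β i : ℝ) ^ 2) ^ 2 :=
  calc ∑ i, (β i : ℝ) ^ 2 - ∑ i, (β i : ℝ) ^ 2 * cCoef n (β i)
      = ∑ i, (β i : ℝ) ^ 2 * (1 - cCoef n (β i)) := by
        rw [← Finset.sum_sub_distrib]; simp only [mul_sub, mul_one]
    _ ≤ ∑ i, (β i : ℝ) ^ 2 * (π ^ 2 / (12 * n ^ 2) * (β i : ℝ) ^ 2) := by
        gcongr with i; exact one_sub_cCoef_le (hβ i) hn
    _ = π ^ 2 / (12 * n ^ 2) * ∑ i, ((β i : ℝ) ^ 2) ^ 2 := by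
        rw [Finset.mul_sum]; congr 1; ext i; ring
    _ ≤ π ^ 2 / (12 * n ^ 2) * (∑ i, (β i : ℝ) ^ 2) ^ 2 := by
        gcongr; exact Finset.sum_sq_le_sq_sum_of_nonneg fun i _ => sq_nonneg _

lemma abs_neg_inv_sub_inv_le [Nonempty ι] (hβ : ∀ i, 0 < β i ∧ β i ≤ n) :
    |(-1 / (π ^ 2 * ∑ i, (β i : ℝ) ^ 2)) - 1 / (-π ^ 2 * ∑ i, (β i : ℝ) ^ 2 * cCoef n (β i))| ≤
      π ^ 2 / (48 * n ^ 2) := by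
  set S := ∑ i, (β i : ℝ) ^ 2
  set T := ∑ i, (β i : ℝ) ^ 2 * cCoef n (β i)
  have hn : n ≠ 0 := by obtain ⟨i⟩ := ‹Nonempty ι›; have := hβ i; omega
  have hS : 0 < S := Finset.sum_pos (fun i _ => by have := (hβ i).1; positivity) Finset.univ_nonempty
  have hST : |S - T| ≤ π ^ 2 / (12 * n ^ 2) * S ^ 2 := by
    rw [abs_of_nonneg (sub_nonneg.2 sum_sq_mul_cCoef_le_sum_sq)]
    exact sum_sq_sub_sum_sq_mul_cCoef_le (fun i => (hβ i).1.ne') hn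
  have key := abs_inv_sub_inv_le_of_abs_sub_le (by positivity) hS
    (four_div_pi_sq_mul_sum_sq_le hβ) hST
  calc |(-1 / (π ^ 2 * S)) - 1 / (-π ^ 2 * T)| = |T⁻¹ - S⁻¹| / π ^ 2 := by
        rw [show -1 / (π ^ 2 * S) - 1 / (-π ^ 2 * T) = (T⁻¹ - S⁻¹) / π ^ 2 by ring, abs_div,
          abs_of_pos (by positivity : (0 : ℝ) < π ^ 2)]
    _ ≤ π ^ 2 / (12 * n ^ 2) / (4 / π ^ 2) / π ^ 2 := by gcongr
    _ = π ^ 2 / (48 * n ^ 2) := by field_simp; ring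

end Sums

/-- with `λ_β = -π² ∑ l, βₗ² c_{βₗ}`, there is a constant `C` (depending only
on `k`) such that `|-1/(π²|β|²) - 1/λ_β| ≤ C/(|β| n)` for all `n ≥ 2` and
`β ∈ {1,…,n-1}^k`. -/
theorem stmt16 (k : ℕ) (hk : 1 ≤ k) :
    ∃ C : ℝ, 0 < C ∧ ∀ n : ℕ, 2 ≤ n → ∀ β : Fin k → ℕ,
      (∀ l, 1 ≤ β l ∧ β l ≤ n - 1) →
      |(-1 / (π ^ 2 * ∑ l, (β l : ℝ) ^ 2)) -
          1 / (-π ^ 2 * ∑ l, (β l : ℝ) ^ 2 * cCoef n (β l))| ≤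
        C / (Real.sqrt (∑ l, (β l : ℝ) ^ 2) * n) := by
  have : Nonempty (Fin k) := ⟨⟨0, hk⟩⟩
  have hk₀ : (0 : ℝ) < √k := Real.sqrt_pos.2 (by exact_mod_cast hk)
  refine ⟨π ^ 2 * √k / 48, by positivity, fun n hn β hβ => ?_⟩
  have hβ' : ∀ l, 0 < β l ∧ β l ≤ n := fun l => by have := hβ l; omega
  have hn₀ : (0 : ℝ) < n := by exact_mod_cast (by omega : 0 < n)
  have hS₀ : 0 < √(∑ l, (β l : ℝ) ^ 2) :=
    Real.sqrt_pos.2 (Finset.sum_pos (fun l _ => by have := (hβ' l).1; positivity)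
      Finset.univ_nonempty)
  have hS : √(∑ l, (β l : ℝ) ^ 2) ≤ √k * n := by
    rw [Real.sqrt_le_left (by positivity), mul_pow, Real.sq_sqrt (Nat.cast_nonneg k)]
    calc ∑ l, (β l : ℝ) ^ 2 ≤ ∑ _l : Fin k, (n : ℝ) ^ 2 := by
          gcongr with l; exact_mod_cast (hβ' l).2
      _ = k * n ^ 2 := by simp
  calc _ ≤ π ^ 2 / (48 * n ^ 2) := abs_neg_inv_sub_inv_le hβ'
    _ = π ^ 2 * √k / 48 / (√k * n * n) := by field_simp
    _ ≤ π ^ 2 * √k / 48 / (√(∑ l, (β l : ℝ) ^ 2) * n) := by gcongr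
end
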